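/- For every c > 0 and x₀ ∈ ℝ, the function U(x,t) = √(6c) · sech( √c (x − ct − x₀) ) satisfies the modified KdV (mKdV) equation ∂_t U + ∂_x³ U + U² ∂_x U = 0 at every point (x,t) ∈ ℝ × ℝ. -/

import Mathlib

open Real

/-- `sech y = 1 / cosh y`. -/
noncomputable def sech (y : ℝ) : ℝ := 1 / Real.cosh y

/-- The one-soliton profile `U(x,t) = √(6c)·sech(√c(x − ct − x₀))` of the
modified KdV equation. -/
noncomputable def mkdvSoliton (c x₀ x t : ℝ) : ℝ :=
  Real.sqrt (6 * c) * sech (Real.sqrt c * (x - c * t - x₀))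

lemma cosh_ne (y : ℝ) : Real.cosh y ≠ 0 := (Real.cosh_pos y).ne'

lemma inner_deriv (s k y : ℝ) : HasDerivAt (fun z : ℝ => s * (z - k)) s y := by
  simpa using ((hasDerivAt_id y).sub_const k).const_mul s

lemma cosh_comp_deriv (s k y : ℝ) :
    HasDerivAt (fun z : ℝ => Real.cosh (s * (z - k))) (Real.sinh (s * (y - k)) * s) y :=
  (Real.hasDerivAt_cosh _).comp y (inner_deriv s k y)

lemma sinh_comp_deriv (s k y : ℝ) :
    HasDerivAt (fun z : ℝ => Real.sinh (s * (z - k))) (Real.cosh (s * (y - k)) * s) y :=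
  (Real.hasDerivAt_sinh _).comp y (inner_deriv s k y)

lemma L1 (a s k y : ℝ) :
    HasDerivAt (fun z : ℝ => a * (Real.cosh (s * (z - k)))⁻¹)
      (a * s * (-Real.sinh (s * (y - k)) / Real.cosh (s * (y - k)) ^ 2)) y := by
  have h := ((cosh_comp_deriv s k y).inv (cosh_ne _)).const_mul a
  refine h.congr_deriv ?_
  ring

lemma L2 (a s k y : ℝ) :
    HasDerivAt (fun z : ℝ => a * s * (-Real.sinh (s * (z - k)) / Real.cosh (s * (z - k)) ^ 2))
      (a * s ^ 2 * (2 * Real.sinh (s * (y - k)) ^ 2 / Real.cosh (s * (y - k)) ^ 3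
        - (Real.cosh (s * (y - k)))⁻¹)) y := by
  have hnum : HasDerivAt (fun z : ℝ => -Real.sinh (s * (z - k)))
      (-(Real.cosh (s * (y - k)) * s)) y := (sinh_comp_deriv s k y).neg
  have hden : HasDerivAt (fun z : ℝ => Real.cosh (s * (z - k)) ^ 2)
      (2 * Real.cosh (s * (y - k)) ^ 1 * (Real.sinh (s * (y - k)) * s)) y :=
    (cosh_comp_deriv s k y).pow 2
  have h := ((hnum.div hden (by positivity)).const_mul (a * s))
  refine h.congr_deriv ?_
  have hc := cosh_ne (s * (y - k))
  field_simp
  ring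

lemma L3 (a s k y : ℝ) :
    HasDerivAt (fun z : ℝ => a * s ^ 2 * (2 * Real.sinh (s * (z - k)) ^ 2 / Real.cosh (s * (z - k)) ^ 3
        - (Real.cosh (s * (z - k)))⁻¹))
      (a * s ^ 3 * (5 * Real.sinh (s * (y - k)) / Real.cosh (s * (y - k)) ^ 2
        - 6 * Real.sinh (s * (y - k)) ^ 3 / Real.cosh (s * (y - k)) ^ 4)) y := by
  have hnum : HasDerivAt (fun z : ℝ => 2 * Real.sinh (s * (z - k)) ^ 2)
      (2 * (2 * Real.sinh (s * (y - k)) ^ 1 * (Real.cosh (s * (y - k)) * s))) y :=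
    ((sinh_comp_deriv s k y).pow 2).const_mul 2
  have hden : HasDerivAt (fun z : ℝ => Real.cosh (s * (z - k)) ^ 3)
      (3 * Real.cosh (s * (y - k)) ^ 2 * (Real.sinh (s * (y - k)) * s)) y :=
    (cosh_comp_deriv s k y).pow 3
  have hinv : HasDerivAt (fun z : ℝ => (Real.cosh (s * (z - k)))⁻¹)
      (-(Real.sinh (s * (y - k)) * s) / Real.cosh (s * (y - k)) ^ 2) y :=
    (cosh_comp_deriv s k y).inv (cosh_ne _)
  have h := (((hnum.div hden (by positivity)).sub hinv).const_mul (a * s ^ 2))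
  refine h.congr_deriv ?_
  have hc := cosh_ne (s * (y - k))
  field_simp
  ring

lemma mkdv_fun_eq (c x₀ t : ℝ) :
    (fun y : ℝ => mkdvSoliton c x₀ y t)
      = fun y : ℝ => Real.sqrt (6 * c) * (Real.cosh (Real.sqrt c * (y - (c * t + x₀))))⁻¹ := by
  funext y
  simp only [mkdvSoliton, sech, one_div]
  ring_nf

/-- For every `c > 0` and `x₀ ∈ ℝ`, the function
`U(x,t) = √(6c)·sech(√c(x − ct − x₀))` satisfies the mKdV equation
`∂ₜU + ∂ₓ³U + U²∂ₓU = 0` at every point `(x,t) ∈ ℝ × ℝ`. -/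
theorem mkdv_soliton (c x₀ : ℝ) (hc : 0 < c) :
    ∀ x t : ℝ,
      deriv (fun τ : ℝ => mkdvSoliton c x₀ x τ) t
        + iteratedDeriv 3 (fun y : ℝ => mkdvSoliton c x₀ y t) x
        + mkdvSoliton c x₀ x t ^ 2
            * deriv (fun y : ℝ => mkdvSoliton c x₀ y t) x = 0 := by
  intro x t
  have hs2 : Real.sqrt c ^ 2 = c := Real.sq_sqrt hc.le
  have ha2 : Real.sqrt (6 * c) ^ 2 = 6 * c := Real.sq_sqrt (by linarith)
  set s := Real.sqrt c with hs
  set a := Real.sqrt (6 * c) with ha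
  set k := c * t + x₀ with hk
  -- time derivative
  have htime : deriv (fun τ : ℝ => mkdvSoliton c x₀ x τ) t
      = a * s * c * (Real.sinh (s * (x - k)) / Real.cosh (s * (x - k)) ^ 2) := by
    have heq : (fun τ : ℝ => mkdvSoliton c x₀ x τ)
        = fun τ : ℝ => a * (Real.cosh (-(s * c) * (τ - (x - x₀) / c)))⁻¹ := by
      funext τ
      simp only [mkdvSoliton, sech, one_div, ← hs, ← ha]
      rw [show s * (x - c * τ - x₀) = -(s * c) * (τ - (x - x₀) / c) by field_simp; ring]
    rw [heq, (L1 a (-(s * c)) ((x - x₀) / c) t).deriv,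
      show -(s * c) * (t - (x - x₀) / c) = s * (x - k) by rw [hk]; field_simp; ring]
    ring
  -- spatial derivatives
  rw [mkdv_fun_eq c x₀ t, ← hs, ← ha, ← hk]
  have hd1 : deriv (fun y : ℝ => a * (Real.cosh (s * (y - k)))⁻¹)
      = fun y => a * s * (-Real.sinh (s * (y - k)) / Real.cosh (s * (y - k)) ^ 2) :=
    funext fun y => (L1 a s k y).deriv
  have hd2 : deriv (fun y : ℝ => a * s * (-Real.sinh (s * (y - k)) / Real.cosh (s * (y - k)) ^ 2))
      = fun y => a * s ^ 2 * (2 * Real.sinh (s * (y - k)) ^ 2 / Real.cosh (s * (y - k)) ^ 3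
        - (Real.cosh (s * (y - k)))⁻¹) :=
    funext fun y => (L2 a s k y).deriv
  have hd3 : deriv (fun y : ℝ => a * s ^ 2 * (2 * Real.sinh (s * (y - k)) ^ 2 / Real.cosh (s * (y - k)) ^ 3
        - (Real.cosh (s * (y - k)))⁻¹))
      = fun y => a * s ^ 3 * (5 * Real.sinh (s * (y - k)) / Real.cosh (s * (y - k)) ^ 2
        - 6 * Real.sinh (s * (y - k)) ^ 3 / Real.cosh (s * (y - k)) ^ 4) :=
    funext fun y => (L3 a s k y).deriv
  have hiter : iteratedDeriv 3 (fun y : ℝ => a * (Real.cosh (s * (y - k)))⁻¹) x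
      = a * s ^ 3 * (5 * Real.sinh (s * (x - k)) / Real.cosh (s * (x - k)) ^ 2
        - 6 * Real.sinh (s * (x - k)) ^ 3 / Real.cosh (s * (x - k)) ^ 4) := by
    have h3 : iteratedDeriv 3 (fun y : ℝ => a * (Real.cosh (s * (y - k)))⁻¹) x
        = deriv (deriv (deriv (fun y : ℝ => a * (Real.cosh (s * (y - k)))⁻¹))) x := by
      simp [iteratedDeriv_succ, iteratedDeriv_zero]
    rw [h3, hd1, hd2, hd3]
  have hU : mkdvSoliton c x₀ x t = a * (Real.cosh (s * (x - k)))⁻¹ := by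
    have := congrFun (mkdv_fun_eq c x₀ t) x
    rw [this, ← hs, ← ha, ← hk]
  rw [htime, hiter, hd1, hU]
  have hcw := cosh_ne (s * (x - k))
  have hsq : Real.cosh (s * (x - k)) ^ 2 = Real.sinh (s * (x - k)) ^ 2 + 1 :=
    Real.cosh_sq _
  have h6 : a ^ 2 = 6 * s ^ 2 := by rw [hs2]; exact ha2
  rw [← hs2]
  field_simp
  linear_combination (6 * a * s ^ 3 * Real.sinh (s * (x - k))) * hsq
    - (a * s * Real.sinh (s * (x - k))) * h6
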